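/- arXiv:2502.20505 — 7 statements merged into one kernel-verified Lean document; each statement's English description precedes it below -/
import Mathlib

section
/- Let X be a topological space and let p : X^n → X be an n-mean. If k is a positive integer dividing n, then there exists a k-mean q : X^k → X. (Explicitly, q(x_1,...,x_k) := p(x_1,...,x_k,...,x_1,...,x_k), with the block x_1,...,x_k repeated n/k times, is a k-mean.) -/
/-- If `p : X^n → X` is an `n`-mean and `k` is a positive integer dividing `n`,
then there is a `k`-mean `q : X^k → X`, explicitly given by repeating the block
`x_1, …, x_k` exactly `n/k` times in the argument of `p`. -/
theorem exists_k_mean_of_n_mean {X : Type*} [TopologicalSpace X] {n k : ℕ}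
    (hk : 0 < k) (hdvd : k ∣ n)
    (p : (Fin n → X) → X) (hp : Continuous p)
    (hM1 : ∀ x : X, p (fun _ => x) = x)
    (hM2 : ∀ (x : Fin n → X) (σ : Equiv.Perm (Fin n)), p (x ∘ σ) = p x) :
    ∃ q : (Fin k → X) → X,
      (∀ y : Fin k → X, q y = p (fun i : Fin n => y ⟨i.val % k, Nat.mod_lt _ hk⟩)) ∧
      Continuous q ∧
      (∀ x : X, q (fun _ => x) = x) ∧
      (∀ (y : Fin k → X) (σ : Equiv.Perm (Fin k)), q (y ∘ σ) = q y) := by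
  obtain ⟨m, rfl⟩ := hdvd
  have hbound : ∀ (i : Fin (k * m)) (s : ℕ), s < k → k * (i.val / k) + s < k * m := by
    intro i s hs
    have hdiv : i.val / k < m := Nat.div_lt_of_lt_mul i.isLt
    calc k * (i.val / k) + s < k * (i.val / k) + k := by omega
    _ = k * (i.val / k + 1) := by ring
    _ ≤ k * m := Nat.mul_le_mul_left _ (by omega)
  -- blockwise permutation associated to a permutation of Fin k
  have key : ∀ (σ τ : Equiv.Perm (Fin k)), (∀ a, τ (σ a) = a) →
      ∀ j : Fin (k * m),
        (fun i : Fin (k * m) =>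
          (⟨k * (i.val / k) + (τ ⟨i.val % k, Nat.mod_lt _ hk⟩).val,
            hbound i _ (τ _).isLt⟩ : Fin (k * m)))
        ((fun i : Fin (k * m) =>
          (⟨k * (i.val / k) + (σ ⟨i.val % k, Nat.mod_lt _ hk⟩).val,
            hbound i _ (σ _).isLt⟩ : Fin (k * m))) j) = j := by
    intro σ τ hτσ j
    apply Fin.ext
    have hs : (σ ⟨j.val % k, Nat.mod_lt _ hk⟩).val < k := (σ _).isLt
    simp only [Nat.mul_add_div hk, Nat.mul_add_mod, Nat.div_eq_of_lt hs,
      Nat.mod_eq_of_lt hs, Nat.add_zero, Fin.eta, hτσ]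
    exact Nat.div_add_mod _ _
  refine ⟨fun y => p (fun i => y ⟨i.val % k, Nat.mod_lt _ hk⟩), fun y => rfl, ?_, ?_, ?_⟩
  · exact hp.comp (continuous_pi fun i => continuous_apply _)
  · intro x; exact hM1 x
  · intro y σ
    let T : Equiv.Perm (Fin (k * m)) :=
      { toFun := fun i => ⟨k * (i.val / k) + (σ ⟨i.val % k, Nat.mod_lt _ hk⟩).val,
          hbound i _ (σ _).isLt⟩
        invFun := fun i => ⟨k * (i.val / k) + (σ⁻¹ ⟨i.val % k, Nat.mod_lt _ hk⟩).val,
          hbound i _ (σ⁻¹ _).isLt⟩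
        left_inv := key σ σ⁻¹ (fun a => Equiv.symm_apply_apply σ a)
        right_inv := key σ⁻¹ σ (fun a => Equiv.apply_symm_apply σ a) }
    have := hM2 (fun i : Fin (k * m) => y ⟨i.val % k, Nat.mod_lt _ hk⟩) T
    dsimp only
    rw [← this]
    congr 1
    funext i
    simp only [Function.comp_apply]
    show y (σ ⟨i.val % k, _⟩) = y ⟨(T i).val % k, _⟩
    congr 1
    apply Fin.ext
    symm
    simp [T, Nat.mul_add_mod, Nat.mod_eq_of_lt (σ _).isLt]
end

section
/- Let G be a finite group with exactly n elements g_1,...,g_n, acting continuously on a topological space X, let p : X^n → X be an equivariant n-mean, let Φ : X × [0,1] → X be continuous, and define Ψ(x,t) := p(g_1^{-1} Φ(g_1 x, t), ..., g_n^{-1} Φ(g_n x, t)). Then: (1) if Φ(x,0) = x for all x ∈ X, then Ψ(x,0) = x for all x ∈ X; (2) if there is c ∈ X with Φ(x,1) = c for all x ∈ X, then Ψ(x,1) = p(g_1^{-1} c, ..., g_n^{-1} c) for all x ∈ X, so Ψ(·,1) is constant; (3) consequently, if Φ is a contraction of X, then Ψ is an equivariant contraction of X. -/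
/-- With `G` a finite group with exactly `n` elements (enumerated by
`e : Fin n ≃ G`) acting continuously on `X`, `p` an equivariant `n`-mean, `Φ : X × [0,1] → X`
continuous and `Ψ(x,t) := p(g_1⁻¹ Φ(g_1 x, t), …, g_n⁻¹ Φ(g_n x, t))`:
(1) if `Φ(·,0) = id` then `Ψ(·,0) = id`;
(2) if `Φ(·,1) ≡ c` then `Ψ(·,1) ≡ p(g_1⁻¹ c, …, g_n⁻¹ c)` is constant;
(3) hence if `Φ` is a contraction then `Ψ` is an equivariant contraction. -/
theorem psi_contraction_properties
    {G : Type*} [Group G] {X : Type*} [TopologicalSpace X] [MulAction G X]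
    (hc : ∀ g : G, Continuous fun x : X => g • x)
    {n : ℕ} (e : Fin n ≃ G)
    (p : (Fin n → X) → X) (hp : Continuous p)
    (hM1 : ∀ x : X, p (fun _ => x) = x)
    (hM2 : ∀ (x : Fin n → X) (σ : Equiv.Perm (Fin n)), p (x ∘ σ) = p x)
    (heq : ∀ (g : G) (x : Fin n → X), p (fun i => g • x i) = g • p x)
    (Φ : X × unitInterval → X) (hΦ : Continuous Φ)
    (Ψ : X × unitInterval → X)
    (hΨ : ∀ (x : X) (t : unitInterval),
      Ψ (x, t) = p (fun i => (e i)⁻¹ • Φ (e i • x, t))) :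
    ((∀ x : X, Φ (x, 0) = x) → ∀ x : X, Ψ (x, 0) = x) ∧
    (∀ c : X, (∀ x : X, Φ (x, 1) = c) → ∀ x : X, Ψ (x, 1) = p (fun i => (e i)⁻¹ • c)) ∧
    (((∀ x : X, Φ (x, 0) = x) ∧ ∃ c : X, ∀ x : X, Φ (x, 1) = c) →
      (Continuous Ψ ∧ (∀ x : X, Ψ (x, 0) = x) ∧ (∃ c' : X, ∀ x : X, Ψ (x, 1) = c') ∧
        ∀ (g : G) (x : X) (t : unitInterval), Ψ (g • x, t) = g • Ψ (x, t))) := by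
  have h0 : (∀ x : X, Φ (x, 0) = x) → ∀ x : X, Ψ (x, 0) = x := by
    intro hΦ0 x
    rw [hΨ]
    simp only [hΦ0, inv_smul_smul, hM1]
  have h1 : ∀ c : X, (∀ x : X, Φ (x, 1) = c) → ∀ x : X,
      Ψ (x, 1) = p (fun i => (e i)⁻¹ • c) := by
    intro c hΦ1 x
    rw [hΨ]
    simp only [hΦ1]
  have hEq : ∀ (g : G) (x : X) (t : unitInterval), Ψ (g • x, t) = g • Ψ (x, t) := by
    intro g x t
    rw [hΨ, hΨ]
    set f : Fin n → X := fun i => (e i)⁻¹ • Φ (e i • g • x, t) with hf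
    set σ : Equiv.Perm (Fin n) := e.trans ((Equiv.mulRight g⁻¹).trans e.symm) with hσ
    have key : f ∘ σ = fun i => g • ((e i)⁻¹ • Φ (e i • x, t)) := by
      funext i
      have hei : e (σ i) = e i * g⁻¹ := by simp [hσ]
      have harg : (e i * g⁻¹) • g • x = e i • x := by
        rw [smul_smul, inv_mul_cancel_right]
      simp only [Function.comp_apply, hf, hei, harg, mul_inv_rev, inv_inv, mul_smul]
    calc p f = p (f ∘ σ) := (hM2 f σ).symm
      _ = p (fun i => g • ((e i)⁻¹ • Φ (e i • x, t))) := by rw [key]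
      _ = g • p (fun i => (e i)⁻¹ • Φ (e i • x, t)) := heq g _
  refine ⟨h0, h1, fun ⟨hΦ0, c, hΦ1⟩ => ⟨?_, h0 hΦ0, ⟨_, h1 c hΦ1⟩, hEq⟩⟩
  have : Ψ = fun q : X × unitInterval => p (fun i => (e i)⁻¹ • Φ (e i • q.1, q.2)) := by
    funext q; exact hΨ q.1 q.2
  rw [this]
  exact hp.comp (continuous_pi fun i =>
    (hc _).comp (hΦ.comp (((hc _).comp continuous_fst).prodMk continuous_snd)))
end

section
/- Let G be a finite group with exactly n elements acting continuously on a topological space X. If X is contractible and there exists an equivariant n-mean p : X^n → X, then X is G-contractible. -/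
/-- Let `G` be a finite group with exactly `n` elements (enumerated by
`e : Fin n ≃ G`) acting continuously on a topological space `X`. If `X` is contractible
and there exists an equivariant `n`-mean `p : X^n → X`, then `X` is `G`-contractible. -/
theorem G_contractible_of_contractible_of_equivariant_mean
    {G : Type*} [Group G] {X : Type*} [TopologicalSpace X] [MulAction G X]
    (hc : ∀ g : G, Continuous fun x : X => g • x)
    {n : ℕ} (e : Fin n ≃ G)
    [ContractibleSpace X]
    (p : (Fin n → X) → X) (hp : Continuous p)
    (hM1 : ∀ x : X, p (fun _ => x) = x)
    (hM2 : ∀ (x : Fin n → X) (σ : Equiv.Perm (Fin n)), p (x ∘ σ) = p x)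
    (heq : ∀ (g : G) (x : Fin n → X), p (fun i => g • x i) = g • p x) :
    ∃ Ψ : X × unitInterval → X, Continuous Ψ ∧
      (∀ x : X, Ψ (x, 0) = x) ∧
      (∃ c : X, ∀ x : X, Ψ (x, 1) = c) ∧
      (∀ (g : G) (x : X) (t : unitInterval), Ψ (g • x, t) = g • Ψ (x, t)) := by
  obtain ⟨x₀, hnull⟩ := (contractible_iff_id_nullhomotopic X).mp ‹_›
  obtain ⟨F⟩ := hnull
  refine ⟨fun q => p (fun i => e i • F (q.2, (e i)⁻¹ • q.1)), ?_, ?_, ?_, ?_⟩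
  · refine hp.comp (continuous_pi fun i => ?_)
    exact (hc (e i)).comp (F.continuous.comp
      (continuous_snd.prodMk ((hc (e i)⁻¹).comp continuous_fst)))
  · intro x
    simp only [F.apply_zero]
    have : ∀ i : Fin n, e i • (e i)⁻¹ • x = x := fun i => smul_inv_smul _ _
    simp only [ContinuousMap.id_apply, this, hM1]
  · refine ⟨p (fun i => e i • x₀), fun x => ?_⟩
    simp only [F.apply_one, ContinuousMap.const_apply]
  · intro g x t
    set q : Fin n → X := fun i => e i • F (t, (e i)⁻¹ • x) with hq
    set σ : Equiv.Perm (Fin n) := e.trans ((Equiv.mulLeft g⁻¹).trans e.symm) with hσ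
    have key : ∀ i : Fin n, e i • F (t, (e i)⁻¹ • g • x) = g • q (σ i) := by
      intro i
      have h1 : (e i)⁻¹ • g • x = (e (σ i))⁻¹ • x := by
        simp only [hσ, hq, Equiv.trans_apply, Equiv.apply_symm_apply, Equiv.coe_mulLeft,
          mul_inv_rev, inv_inv, smul_smul]
      rw [h1]
      have h2 : e i = g * e (σ i) := by
        simp only [hσ, Equiv.trans_apply, Equiv.apply_symm_apply, Equiv.coe_mulLeft,
          mul_inv_cancel_left]
      rw [hq]
      conv_lhs => rw [h2, mul_smul]
    calc p (fun i => e i • F (t, (e i)⁻¹ • g • x))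
        = p (fun i => g • q (σ i)) := by simp only [key]
      _ = g • p (fun i => q (σ i)) := heq g _
      _ = g • p (q ∘ σ) := rfl
      _ = g • p q := by rw [hM2]
end

section
/- Let (X,d) be a complete metric space on which a compact Hausdorff topological group G acts continuously. If the set X^G of G-fixed points is nonempty and there exists an equivariant contractive quasi-mean p : X × X → X, then X is G-contractible. -/
/-!
Fix a `G`-fixed point `x₀`. Iterating the quasi-mean `p` on dyadic subdivisions produces, for
every `x`, points `γₓ(k / 2ⁿ)` of a "path" from `x` to `x₀`: the point inserted between two
consecutive points of level `n` is their image under `p`. Consecutive points of level `n` are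
`λⁿ d(x, x₀)` apart, so the step functions `t ↦ γₓ(⌊t 2ⁿ⌋ / 2ⁿ)` converge geometrically fast,
locally uniformly in `(x, t)`, and their limit is continuous. Since `p` is equivariant and `x₀`
is fixed, every approximation, hence the limit, is equivariant.
-/

open Filter Topology

theorem Nat.floor_le_floor_add_one {R : Type*} [Ring R] [LinearOrder R] [IsStrictOrderedRing R]
    [FloorSemiring R] {a b : R} (h : a ≤ b + 1) : ⌊a⌋₊ ≤ ⌊b⌋₊ + 1 := by
  have : ⌊a - 1⌋₊ ≤ ⌊b⌋₊ := Nat.floor_le_floor (sub_le_iff_le_add.2 h)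
  rw [Nat.floor_sub_one] at this
  omega

theorem Nat.floor_mul_two_pow_succ_div_two {K : Type*} [Semifield K] [LinearOrder K]
    [IsStrictOrderedRing K] [FloorSemiring K] (t : K) (n : ℕ) :
    ⌊t * 2 ^ (n + 1)⌋₊ / 2 = ⌊t * 2 ^ n⌋₊ := by
  rw [← Nat.floor_div_ofNat, pow_succ, ← mul_assoc, mul_div_cancel_right₀ _ two_ne_zero]

section QuasiMean

variable {X : Type*}

/-- The metric condition of a contractive quasi-mean with constant `lam`; continuity of `p` is a
separate hypothesis. -/
def ContractiveQuasiMeanWith [Dist X] (lam : ℝ) (p : X × X → X) : Prop :=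
  ∀ x y : X, max (dist x (p (x, y))) (dist y (p (x, y))) ≤ lam * dist x y

namespace ContractiveQuasiMeanWith

variable [MetricSpace X] {lam : ℝ} {p : X × X → X}

theorem dist_left_le (hp : ContractiveQuasiMeanWith lam p) (x y : X) :
    dist x (p (x, y)) ≤ lam * dist x y :=
  (le_max_left _ _).trans (hp x y)

theorem dist_right_le (hp : ContractiveQuasiMeanWith lam p) (x y : X) :
    dist y (p (x, y)) ≤ lam * dist x y :=
  (le_max_right _ _).trans (hp x y)

theorem apply_self (hp : ContractiveQuasiMeanWith lam p) (x : X) : p (x, x) = x := by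
  have h := hp.dist_left_le x x
  rw [dist_self, mul_zero] at h
  exact (dist_le_zero.1 h).symm

end ContractiveQuasiMeanWith

/-- `dyadicChain p x y n k` is the point at time `k / 2 ^ n` of the path from `x` to `y` obtained
by subdividing with `p`; indices `k ≥ 2 ^ n` are sent to `y`. -/
def dyadicChain (p : X × X → X) (x y : X) : ℕ → ℕ → X
  | 0, k => if k = 0 then x else y
  | n + 1, k =>
      if k % 2 = 0 then dyadicChain p x y n (k / 2)
      else p (dyadicChain p x y n (k / 2), dyadicChain p x y n (k / 2 + 1))

section dyadicChain

variable (p : X × X → X) (x y : X)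

theorem dyadicChain_two_mul (n j : ℕ) :
    dyadicChain p x y (n + 1) (2 * j) = dyadicChain p x y n j := by
  simp [dyadicChain]

theorem dyadicChain_two_mul_add_one (n j : ℕ) :
    dyadicChain p x y (n + 1) (2 * j + 1) =
      p (dyadicChain p x y n j, dyadicChain p x y n (j + 1)) := by
  simp [dyadicChain, Nat.add_mod, Nat.add_div]

@[simp]
theorem dyadicChain_zero_right (n : ℕ) : dyadicChain p x y n 0 = x := by
  induction n with
  | zero => simp [dyadicChain]
  | succ n ih => simpa using (dyadicChain_two_mul p x y n 0).trans ih

theorem dyadicChain_of_two_pow_le (hy : p (y, y) = y) :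
    ∀ n k, 2 ^ n ≤ k → dyadicChain p x y n k = y := by
  intro n
  induction n with
  | zero => intro k hk; simp [dyadicChain, Nat.one_le_iff_ne_zero.1 hk]
  | succ n ih =>
    intro k hk
    obtain ⟨j, rfl | rfl⟩ := Nat.even_or_odd' k
    · rw [dyadicChain_two_mul]; exact ih j (by rw [pow_succ] at hk; omega)
    · rw [dyadicChain_two_mul_add_one, ih j (by rw [pow_succ] at hk; omega),
        ih (j + 1) (by rw [pow_succ] at hk; omega), hy]

theorem smul_dyadicChain {G : Type*} [SMul G X] (g : G)
    (hg : ∀ a b : X, p (g • a, g • b) = g • p (a, b)) :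
    ∀ n k, dyadicChain p (g • x) (g • y) n k = g • dyadicChain p x y n k := by
  intro n
  induction n with
  | zero => intro k; by_cases hk : k = 0 <;> simp [dyadicChain, hk]
  | succ n ih =>
    intro k
    obtain ⟨j, rfl | rfl⟩ := Nat.even_or_odd' k
    · simp only [dyadicChain_two_mul, ih]
    · simp only [dyadicChain_two_mul_add_one, ih, hg]

theorem continuous_dyadicChain [TopologicalSpace X] {p : X × X → X} (hp : Continuous p) :
    ∀ n k, Continuous fun q : X × X => dyadicChain p q.1 q.2 n k := by
  intro n
  induction n with
  | zero =>
    intro k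
    by_cases hk : k = 0 <;> simp only [dyadicChain, hk, if_true, if_false] <;> fun_prop
  | succ n ih =>
    intro k
    obtain ⟨j, rfl | rfl⟩ := Nat.even_or_odd' k
    · simpa only [dyadicChain_two_mul] using ih j
    · simp only [dyadicChain_two_mul_add_one]
      exact hp.comp ((ih j).prodMk (ih (j + 1)))

variable [MetricSpace X] {p} {lam : ℝ}

theorem dist_dyadicChain_succ_le (hp : ContractiveQuasiMeanWith lam p) (hlam : 0 ≤ lam) :
    ∀ n k, dist (dyadicChain p x y n k) (dyadicChain p x y n (k + 1)) ≤ lam ^ n * dist x y := by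
  intro n
  induction n with
  | zero =>
    intro k
    rcases Nat.eq_zero_or_pos k with rfl | hk
    · simp [dyadicChain]
    · simp [dyadicChain, hk.ne']
  | succ n ih =>
    intro k
    obtain ⟨j, rfl | rfl⟩ := Nat.even_or_odd' k
    · rw [dyadicChain_two_mul, dyadicChain_two_mul_add_one]
      calc _ ≤ lam * dist (dyadicChain p x y n j) (dyadicChain p x y n (j + 1)) :=
            hp.dist_left_le _ _
        _ ≤ lam * (lam ^ n * dist x y) := mul_le_mul_of_nonneg_left (ih j) hlam
        _ = lam ^ (n + 1) * dist x y := by ring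
    · rw [show 2 * j + 1 + 1 = 2 * (j + 1) by ring, dyadicChain_two_mul_add_one,
        dyadicChain_two_mul, dist_comm]
      calc _ ≤ lam * dist (dyadicChain p x y n j) (dyadicChain p x y n (j + 1)) :=
            hp.dist_right_le _ _
        _ ≤ lam * (lam ^ n * dist x y) := mul_le_mul_of_nonneg_left (ih j) hlam
        _ = lam ^ (n + 1) * dist x y := by ring

theorem dist_dyadicChain_le_of_le_add_one (hp : ContractiveQuasiMeanWith lam p) (hlam : 0 ≤ lam)
    {n k m : ℕ} (hkm : k ≤ m + 1) (hmk : m ≤ k + 1) :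
    dist (dyadicChain p x y n k) (dyadicChain p x y n m) ≤ lam ^ n * dist x y := by
  rcases show m = k ∨ m = k + 1 ∨ k = m + 1 by omega with rfl | rfl | rfl
  · rw [dist_self]; positivity
  · exact dist_dyadicChain_succ_le x y hp hlam n k
  · rw [dist_comm]; exact dist_dyadicChain_succ_le x y hp hlam n m

theorem dist_dyadicChain_floor_succ_le (hp : ContractiveQuasiMeanWith lam p) (hlam : 0 ≤ lam)
    (t : ℝ) (n : ℕ) :
    dist (dyadicChain p x y n ⌊t * 2 ^ n⌋₊) (dyadicChain p x y (n + 1) ⌊t * 2 ^ (n + 1)⌋₊) ≤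
      lam * dist x y * lam ^ n := by
  rw [← Nat.floor_mul_two_pow_succ_div_two, ← dyadicChain_two_mul]
  calc _ ≤ lam ^ (n + 1) * dist x y :=
        dist_dyadicChain_le_of_le_add_one x y hp hlam (by omega) (by omega)
    _ = lam * dist x y * lam ^ n := by ring

end dyadicChain

noncomputable def dyadicPath [TopologicalSpace X] (p : X × X → X) (x y : X) (t : ℝ) : X :=
  haveI : Nonempty X := ⟨x⟩
  limUnder atTop fun n => dyadicChain p x y n ⌊t * 2 ^ n⌋₊

section dyadicPath

variable (x y : X)

theorem dyadicPath_zero [TopologicalSpace X] [T2Space X] (p : X × X → X) :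
    dyadicPath p x y 0 = x := by
  simp only [dyadicPath, zero_mul, Nat.floor_zero, dyadicChain_zero_right]
  exact tendsto_const_nhds.limUnder_eq

theorem dyadicPath_one [TopologicalSpace X] [T2Space X] {p : X × X → X} (hy : p (y, y) = y) :
    dyadicPath p x y 1 = y := by
  have h : ∀ n : ℕ, dyadicChain p x y n ⌊(1 : ℝ) * 2 ^ n⌋₊ = y := fun n => by
    rw [one_mul, ← Nat.cast_ofNat, ← Nat.cast_pow, Nat.floor_natCast]
    exact dyadicChain_of_two_pow_le p x y hy n _ le_rfl
  simp only [dyadicPath, h]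
  exact tendsto_const_nhds.limUnder_eq

variable [MetricSpace X] [CompleteSpace X] {p : X × X → X} {lam : ℝ}

theorem tendsto_dyadicPath (hp : ContractiveQuasiMeanWith lam p) (hlam₀ : 0 ≤ lam)
    (hlam₁ : lam < 1) (t : ℝ) :
    Tendsto (fun n => dyadicChain p x y n ⌊t * 2 ^ n⌋₊) atTop (𝓝 (dyadicPath p x y t)) :=
  (cauchySeq_of_le_geometric lam _ hlam₁
    (dist_dyadicChain_floor_succ_le x y hp hlam₀ t)).tendsto_limUnder

theorem dist_dyadicChain_dyadicPath_le (hp : ContractiveQuasiMeanWith lam p) (hlam₀ : 0 ≤ lam)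
    (hlam₁ : lam < 1) {t : ℝ} {n k : ℕ} (hk₁ : k ≤ ⌊t * 2 ^ n⌋₊ + 1)
    (hk₂ : ⌊t * 2 ^ n⌋₊ ≤ k + 1) :
    dist (dyadicChain p x y n k) (dyadicPath p x y t) ≤ lam ^ n * dist x y / (1 - lam) := by
  have hlam : 0 < 1 - lam := by linarith
  calc _ ≤ dist (dyadicChain p x y n k) (dyadicChain p x y n ⌊t * 2 ^ n⌋₊) +
        dist (dyadicChain p x y n ⌊t * 2 ^ n⌋₊) (dyadicPath p x y t) := dist_triangle _ _ _
    _ ≤ lam ^ n * dist x y + lam * dist x y * lam ^ n / (1 - lam) :=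
        add_le_add (dist_dyadicChain_le_of_le_add_one x y hp hlam₀ hk₁ hk₂)
          (dist_le_of_le_geometric_of_tendsto lam _ hlam₁
            (dist_dyadicChain_floor_succ_le x y hp hlam₀ t)
            (tendsto_dyadicPath x y hp hlam₀ hlam₁ t) n)
    _ = lam ^ n * dist x y / (1 - lam) := by field_simp; ring

theorem smul_dyadicPath {G : Type*} [SMul G X] [ContinuousConstSMul G X]
    (hp : ContractiveQuasiMeanWith lam p) (hlam₀ : 0 ≤ lam) (hlam₁ : lam < 1) (g : G)
    (hg : ∀ a b : X, p (g • a, g • b) = g • p (a, b)) (t : ℝ) :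
    dyadicPath p (g • x) (g • y) t = g • dyadicPath p x y t := by
  simp only [dyadicPath, smul_dyadicChain p x y g hg]
  exact ((tendsto_dyadicPath x y hp hlam₀ hlam₁ t).const_smul g).limUnder_eq

theorem continuous_dyadicPath (hpc : Continuous p) (hp : ContractiveQuasiMeanWith lam p)
    (hlam₀ : 0 ≤ lam) (hlam₁ : lam < 1) :
    Continuous fun q : X × X × ℝ => dyadicPath p q.1 q.2.1 q.2.2 := by
  refine continuous_of_locally_uniform_approx_of_continuousAt fun ⟨x₀, y₀, t₀⟩ u hu => ?_
  obtain ⟨ε, hε, hεu⟩ := Metric.mem_uniformity_dist.1 hu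
  set R := dist x₀ y₀ + 1
  have hlam : 0 < 1 - lam := by linarith
  obtain ⟨n, hn⟩ := exists_pow_lt_of_lt_one (show 0 < ε * (1 - lam) / R by positivity) hlam₁
  have hdist : ∀ᶠ q : X × X × ℝ in 𝓝 (x₀, y₀, t₀), dist q.1 q.2.1 < R :=
    (continuous_fst.dist continuous_snd.fst).continuousAt.eventually_lt continuousAt_const
      (lt_add_one _)
  have htime : ∀ᶠ q : X × X × ℝ in 𝓝 (x₀, y₀, t₀), |q.2.2 * 2 ^ n - t₀ * 2 ^ n| < 1 :=
    ContinuousAt.eventually_lt (by fun_prop) continuousAt_const (by simp)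
  refine ⟨_, hdist.and htime, fun q => dyadicChain p q.1 q.2.1 n ⌊t₀ * 2 ^ n⌋₊, ?_, ?_⟩
  · exact ((continuous_dyadicChain hpc n _).comp
      (continuous_fst.prodMk continuous_snd.fst)).continuousAt
  · rintro ⟨x, y, t⟩ ⟨hxy, ht⟩
    obtain ⟨ht₁, ht₂⟩ := abs_sub_lt_iff.1 ht
    refine hεu ?_
    rw [dist_comm]
    calc _ ≤ lam ^ n * dist x y / (1 - lam) :=
          dist_dyadicChain_dyadicPath_le x y hp hlam₀ hlam₁
            (Nat.floor_le_floor_add_one (by linarith)) (Nat.floor_le_floor_add_one (by linarith))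
      _ ≤ lam ^ n * R / (1 - lam) := by gcongr
      _ < ε := by rw [div_lt_iff₀ hlam]; rwa [lt_div_iff₀ (by positivity)] at hn

end dyadicPath

end QuasiMean

theorem G_contractible_of_equivariant_contractive_quasi_mean_general
    {G : Type*} [Group G] [TopologicalSpace G]
    {X : Type*} [MetricSpace X] [CompleteSpace X] [MulAction G X] [ContinuousSMul G X]
    (hfix : {x : X | ∀ g : G, g • x = x}.Nonempty)
    (p : X × X → X) (hp : Continuous p)
    (hcontr : ∃ lam ∈ Set.Ioo (0 : ℝ) 1,
      ∀ x y : X, max (dist x (p (x, y))) (dist y (p (x, y))) ≤ lam * dist x y)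
    (heq : ∀ (g : G) (x y : X), p (g • x, g • y) = g • p (x, y)) :
    ∃ Ψ : X × unitInterval → X, Continuous Ψ ∧
      (∀ x : X, Ψ (x, 0) = x) ∧
      (∃ c : X, ∀ x : X, Ψ (x, 1) = c) ∧
      (∀ (g : G) (x : X) (t : unitInterval), Ψ (g • x, t) = g • Ψ (x, t)) := by
  obtain ⟨x₀, hx₀⟩ := hfix
  obtain ⟨lam, ⟨hlam₀, hlam₁⟩, hcontr : ContractiveQuasiMeanWith lam p⟩ := hcontr
  refine ⟨fun z => dyadicPath p z.1 x₀ z.2, ?_, fun x => dyadicPath_zero x x₀ p,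
    ⟨x₀, fun x => dyadicPath_one x x₀ (hcontr.apply_self x₀)⟩, fun g x t => ?_⟩
  · exact (continuous_dyadicPath hp hcontr hlam₀.le hlam₁).comp
      (continuous_fst.prodMk (continuous_const.prodMk (continuous_subtype_val.comp continuous_snd)))
  · simpa only [hx₀ g] using smul_dyadicPath x x₀ hcontr hlam₀.le hlam₁ g (heq g) t

/-- Let `(X,d)` be a complete metric space on which a compact Hausdorff
topological group `G` acts continuously. If `X^G ≠ ∅` and there is an equivariant
contractive quasi-mean `p : X × X → X`, then `X` is `G`-contractible. -/
theorem G_contractible_of_equivariant_contractive_quasi_mean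
    {G : Type*} [Group G] [TopologicalSpace G] [IsTopologicalGroup G]
    [CompactSpace G] [T2Space G]
    {X : Type*} [MetricSpace X] [CompleteSpace X] [MulAction G X] [ContinuousSMul G X]
    (hfix : {x : X | ∀ g : G, g • x = x}.Nonempty)
    (p : X × X → X) (hp : Continuous p)
    (hcontr : ∃ lam ∈ Set.Ioo (0 : ℝ) 1,
      ∀ x y : X, max (dist x (p (x, y))) (dist y (p (x, y))) ≤ lam * dist x y)
    (heq : ∀ (g : G) (x y : X), p (g • x, g • y) = g • p (x, y)) :
    ∃ Ψ : X × unitInterval → X, Continuous Ψ ∧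
      (∀ x : X, Ψ (x, 0) = x) ∧
      (∃ c : X, ∀ x : X, Ψ (x, 1) = c) ∧
      (∀ (g : G) (x : X) (t : unitInterval), Ψ (g • x, t) = g • Ψ (x, t)) :=
  G_contractible_of_equivariant_contractive_quasi_mean_general hfix p hp hcontr heq
end

section
/- Let 0 < a < b be real numbers and let I = [a,b]. Then the geometric mean p : I × I → I given by p(x,y) := √(xy) takes values in I and satisfies max{|x − √(xy)|, |y − √(xy)|} ≤ λ |x − y| for all x,y ∈ I, where λ := (b − √(ab))/(b − a); moreover λ ∈ (0,1), so p is a contractive quasi-mean on I. -/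
lemma gm_key {a b x y : ℝ} (ha : 0 < a) (hab : a < b)
    (hx : x ∈ Set.Icc a b) (hy : y ∈ Set.Icc a b) :
    |x - Real.sqrt (x * y)| ≤ (Real.sqrt b / (Real.sqrt a + Real.sqrt b)) * |x - y| := by
  have hb : 0 < b := ha.trans hab
  have hx0 : 0 < x := lt_of_lt_of_le ha hx.1
  have hy0 : 0 < y := lt_of_lt_of_le ha hy.1
  set sa := Real.sqrt a
  set sb := Real.sqrt b
  set sx := Real.sqrt x
  set sy := Real.sqrt y
  have hsa0 : 0 < sa := Real.sqrt_pos.mpr ha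
  have hsb0 : 0 < sb := Real.sqrt_pos.mpr hb
  have hsx0 : 0 < sx := Real.sqrt_pos.mpr hx0
  have hsy0 : 0 < sy := Real.sqrt_pos.mpr hy0
  have hxb : sx ≤ sb := Real.sqrt_le_sqrt hx.2
  have hay : sa ≤ sy := Real.sqrt_le_sqrt hy.1
  have hx2 : sx ^ 2 = x := Real.sq_sqrt hx0.le
  have hy2 : sy ^ 2 = y := Real.sq_sqrt hy0.le
  have hxy : Real.sqrt (x * y) = sx * sy := Real.sqrt_mul hx0.le y
  have h1 : |x - Real.sqrt (x * y)| = sx * |sx - sy| := by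
    rw [hxy, ← hx2]
    rw [show sx ^ 2 - sx * sy = sx * (sx - sy) by ring, abs_mul, abs_of_pos hsx0]
  have h2 : |x - y| = |sx - sy| * (sx + sy) := by
    rw [← hx2, ← hy2, show sx ^ 2 - sy ^ 2 = (sx - sy) * (sx + sy) by ring,
      abs_mul, abs_of_pos (show (0:ℝ) < sx + sy by linarith)]
  rw [h1, h2, div_mul_eq_mul_div, le_div_iff₀ (by positivity)]
  have hkey : sx * sa ≤ sb * sy := mul_le_mul hxb hay hsa0.le hsb0.le
  nlinarith [abs_nonneg (sx - sy), mul_le_mul_of_nonneg_left hkey (abs_nonneg (sx - sy))]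

/-- Let `0 < a < b` and `I = [a,b]`. The geometric mean `p(x,y) = √(xy)`
takes values in `I` and satisfies `max{|x − √(xy)|, |y − √(xy)|} ≤ λ |x − y|` on `I`,
where `λ = (b − √(ab))/(b − a)`; moreover `λ ∈ (0,1)`, so `p` is a contractive
quasi-mean on `I`. -/
theorem geometric_mean_contractive_quasi_mean
    {a b : ℝ} (ha : 0 < a) (hab : a < b) :
    (∀ x ∈ Set.Icc a b, ∀ y ∈ Set.Icc a b, Real.sqrt (x * y) ∈ Set.Icc a b) ∧
    (∀ x ∈ Set.Icc a b, ∀ y ∈ Set.Icc a b,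
      max |x - Real.sqrt (x * y)| |y - Real.sqrt (x * y)| ≤
        ((b - Real.sqrt (a * b)) / (b - a)) * |x - y|) ∧
    (b - Real.sqrt (a * b)) / (b - a) ∈ Set.Ioo (0 : ℝ) 1 := by
  have hb : 0 < b := ha.trans hab
  have hsa0 : 0 < Real.sqrt a := Real.sqrt_pos.mpr ha
  have hsb0 : 0 < Real.sqrt b := Real.sqrt_pos.mpr hb
  have hsab : Real.sqrt a < Real.sqrt b := Real.sqrt_lt_sqrt ha.le hab
  have ha2 : Real.sqrt a ^ 2 = a := Real.sq_sqrt ha.le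
  have hb2 : Real.sqrt b ^ 2 = b := Real.sq_sqrt hb.le
  have habm : Real.sqrt (a * b) = Real.sqrt a * Real.sqrt b := Real.sqrt_mul ha.le b
  have hlam : (b - Real.sqrt (a * b)) / (b - a)
      = Real.sqrt b / (Real.sqrt a + Real.sqrt b) := by
    rw [habm, div_eq_div_iff (by linarith) (by positivity)]
    nlinarith
  refine ⟨?_, ?_, ?_⟩
  · intro x hx y hy
    constructor
    · have : a = Real.sqrt (a * a) := by rw [Real.sqrt_mul_self ha.le]
      rw [this]
      exact Real.sqrt_le_sqrt (mul_le_mul hx.1 hy.1 ha.le (ha.le.trans hx.1))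
    · have : b = Real.sqrt (b * b) := by rw [Real.sqrt_mul_self hb.le]
      rw [this]
      exact Real.sqrt_le_sqrt (mul_le_mul hx.2 hy.2 (ha.le.trans hy.1) hb.le)
  · intro x hx y hy
    rw [hlam]
    apply max_le
    · exact gm_key ha hab hx hy
    · have := gm_key ha hab hy hx
      rw [mul_comm y x, abs_sub_comm y x] at this
      exact this
  · rw [hlam]
    constructor
    · positivity
    · rw [div_lt_one (by positivity)]; linarith
end

section
/- Let (X,d) be a metric space, let λ ∈ (0,1), and let p : X × X → X be a map satisfying max{d(x, p(x,y)), d(y, p(x,y))} ≤ λ d(x,y) for all x,y ∈ X. Let D be the set of dyadic rationals in [0,1] and let f : D → X satisfy f(j/2^n) = p(f((j−1)/2^n), f((j+1)/2^n)) for every n ≥ 1 and every odd j with 1 ≤ j ≤ 2^n − 1. Then for every n ≥ 0 and every j ∈ {0,1,...,2^n − 1}, d(f(j/2^n), f((j+1)/2^n)) ≤ λ^n · d(f(0), f(1)). -/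
/-- Let `(X,d)` be a metric space, `λ ∈ (0,1)`, and `p : X × X → X` with
`max{d(x,p(x,y)), d(y,p(x,y))} ≤ λ d(x,y)` for all `x,y`. If `f` (defined on the dyadic
rationals of `[0,1]`) satisfies `f(j/2^n) = p(f((j−1)/2^n), f((j+1)/2^n))` for every
`n ≥ 1` and odd `j` with `1 ≤ j ≤ 2^n − 1`, then for every `n ≥ 0` and `j ∈ {0,…,2^n − 1}`,
`d(f(j/2^n), f((j+1)/2^n)) ≤ λ^n · d(f(0), f(1))`. -/
theorem dyadic_recursion_dist_bound
    {X : Type*} [MetricSpace X] {lam : ℝ} (hlam : lam ∈ Set.Ioo (0 : ℝ) 1)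
    (p : X × X → X)
    (hp : ∀ x y : X, max (dist x (p (x, y))) (dist y (p (x, y))) ≤ lam * dist x y)
    (f : ℝ → X)
    (hf : ∀ (n j : ℕ), 1 ≤ n → Odd j → j < 2 ^ n →
      f ((j : ℝ) / 2 ^ n) = p (f (((j : ℝ) - 1) / 2 ^ n), f (((j : ℝ) + 1) / 2 ^ n))) :
    ∀ (n j : ℕ), j < 2 ^ n →
      dist (f ((j : ℝ) / 2 ^ n)) (f (((j : ℝ) + 1) / 2 ^ n)) ≤
        lam ^ n * dist (f 0) (f 1) := by
  obtain ⟨hl0, hl1⟩ := hlam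
  intro n
  induction n with
  | zero =>
    intro j hj
    interval_cases j
    norm_num
  | succ n ih =>
    intro j hj
    have h2 : (2:ℝ) ^ n ≠ 0 := by positivity
    rcases Nat.even_or_odd j with ⟨k, hk⟩ | ⟨k, hk⟩
    · -- j = 2k even; midpoint j+1 is odd
      have hk2 : k < 2 ^ n := by
        have : 2 ^ (n+1) = 2 * 2 ^ n := by ring
        omega
      have hmid := hf (n+1) (j+1) (by omega) ⟨k, by omega⟩ (by omega)
      have e0 : ((j:ℝ) + 1) / 2 ^ (n+1) = ((j+1 : ℕ) : ℝ) / 2 ^ (n+1) := by push_cast; ring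
      have e1 : (j : ℝ) / 2 ^ (n+1) = (k : ℝ) / 2 ^ n := by
        have : (j : ℝ) = 2 * k := by rw [hk]; push_cast; ring
        rw [this]; field_simp; ring
      have e2 : (((j+1:ℕ) : ℝ) - 1) / 2 ^ (n+1) = (k : ℝ) / 2 ^ n := by
        have : ((j+1:ℕ) : ℝ) - 1 = 2 * k := by rw [hk]; push_cast; ring
        rw [this]; field_simp; ring
      have e3 : (((j+1:ℕ) : ℝ) + 1) / 2 ^ (n+1) = ((k : ℝ) + 1) / 2 ^ n := by
        have : ((j+1:ℕ) : ℝ) + 1 = 2 * ((k : ℝ) + 1) := by rw [hk]; push_cast; ring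
        rw [this]; field_simp; ring
      rw [e0, hmid, e1, e2, e3]
      calc dist (f ((k:ℝ)/2^n)) (p (f ((k:ℝ)/2^n), f (((k:ℝ)+1)/2^n)))
          ≤ lam * dist (f ((k:ℝ)/2^n)) (f (((k:ℝ)+1)/2^n)) :=
            le_trans (le_max_left _ _) (hp _ _)
        _ ≤ lam * (lam ^ n * dist (f 0) (f 1)) := by
            exact mul_le_mul_of_nonneg_left (ih k hk2) hl0.le
        _ = lam ^ (n+1) * dist (f 0) (f 1) := by ring
    · -- j = 2k+1 odd
      have hk2 : k < 2 ^ n := by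
        have : 2 ^ (n+1) = 2 * 2 ^ n := by ring
        omega
      have hmid := hf (n+1) j (by omega) ⟨k, hk⟩ (by omega)
      have e1 : ((j : ℝ) - 1) / 2 ^ (n+1) = (k : ℝ) / 2 ^ n := by
        have : (j : ℝ) - 1 = 2 * k := by rw [hk]; push_cast; ring
        rw [this]; field_simp; ring
      have e2 : ((j : ℝ) + 1) / 2 ^ (n+1) = ((k : ℝ) + 1) / 2 ^ n := by
        have : (j : ℝ) + 1 = 2 * ((k : ℝ) + 1) := by rw [hk]; push_cast; ring
        rw [this]; field_simp; ring
      rw [hmid, e1, e2, dist_comm]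
      calc dist (f (((k:ℝ)+1)/2^n)) (p (f ((k:ℝ)/2^n), f (((k:ℝ)+1)/2^n)))
          ≤ lam * dist (f ((k:ℝ)/2^n)) (f (((k:ℝ)+1)/2^n)) :=
            le_trans (le_max_right _ _) (hp _ _)
        _ ≤ lam * (lam ^ n * dist (f 0) (f 1)) :=
            mul_le_mul_of_nonneg_left (ih k hk2) hl0.le
        _ = lam ^ (n+1) * dist (f 0) (f 1) := by ring
end

section
/- Define p : [0,1] × [0,1] → ℝ by p(x,y) := min{x,y} + (x − y)^2 / 2. Then: (1) p(x,y) ∈ [0,1] for all x,y ∈ [0,1]; (2) for all x,y ∈ [0,1] with x ≠ y, both |x − p(x,y)| < |x − y| and |y − p(x,y)| < |x − y|; (3) there is no λ ∈ (0,1) such that |x − p(x,y)| ≤ λ |x − y| for all x,y ∈ [0,1]; in particular p is not a contractive quasi-mean on [0,1]. -/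
/-- For `p(x,y) = min{x,y} + (x − y)²/2` on `[0,1] × [0,1]`:
(1) `p` takes values in `[0,1]`;
(2) `|x − p(x,y)| < |x − y|` and `|y − p(x,y)| < |x − y|` whenever `x ≠ y`;
(3) there is no `λ ∈ (0,1)` with `|x − p(x,y)| ≤ λ |x − y|` for all `x, y ∈ [0,1]`;
in particular `p` is not a contractive quasi-mean on `[0,1]`. -/
theorem min_plus_square_not_contractive :
    (∀ x ∈ Set.Icc (0 : ℝ) 1, ∀ y ∈ Set.Icc (0 : ℝ) 1,
      min x y + (x - y) ^ 2 / 2 ∈ Set.Icc (0 : ℝ) 1) ∧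
    (∀ x ∈ Set.Icc (0 : ℝ) 1, ∀ y ∈ Set.Icc (0 : ℝ) 1, x ≠ y →
      |x - (min x y + (x - y) ^ 2 / 2)| < |x - y| ∧
      |y - (min x y + (x - y) ^ 2 / 2)| < |x - y|) ∧
    ¬ ∃ lam ∈ Set.Ioo (0 : ℝ) 1, ∀ x ∈ Set.Icc (0 : ℝ) 1, ∀ y ∈ Set.Icc (0 : ℝ) 1,
      |x - (min x y + (x - y) ^ 2 / 2)| ≤ lam * |x - y| := by
  refine ⟨?_, ?_, ?_⟩
  · rintro x ⟨hx0, hx1⟩ y ⟨hy0, hy1⟩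
    rcases le_total x y with h | h
    · rw [min_eq_left h]
      constructor <;> nlinarith
    · rw [min_eq_right h]
      constructor <;> nlinarith
  · rintro x ⟨hx0, hx1⟩ y ⟨hy0, hy1⟩ hxy
    rcases lt_or_gt_of_ne hxy with h | h
    · have hd : |x - y| = y - x := by rw [abs_sub_comm]; exact abs_of_pos (by linarith)
      rw [min_eq_left h.le]
      refine ⟨?_, ?_⟩ <;> rw [hd, abs_lt] <;> constructor <;> nlinarith
    · have hd : |x - y| = x - y := abs_of_pos (by linarith)
      rw [min_eq_right h.le]
      refine ⟨?_, ?_⟩ <;> rw [hd, abs_lt] <;> constructor <;> nlinarith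
  · rintro ⟨lam, ⟨hl0, hl1⟩, h⟩
    have hx : (1 - lam) ∈ Set.Icc (0 : ℝ) 1 := ⟨by linarith, by linarith⟩
    have hy : (0 : ℝ) ∈ Set.Icc (0 : ℝ) 1 := ⟨le_refl 0, zero_le_one⟩
    have := h (1 - lam) hx 0 hy
    rw [min_eq_right hx.1, abs_of_pos (by nlinarith), abs_of_pos (by linarith)] at this
    nlinarith
end
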